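/- arXiv:1409.5614 — 4 statements merged into one kernel-verified Lean document; each statement's English description precedes it below -/
import Mathlib

section
/- If S is a cyclotomic numerical semigroup, then P_S is selfreciprocal: x^{deg P_S} · P_S(1/x) = P_S(x), i.e., the coefficient of x^i in P_S equals the coefficient of x^{deg P_S − i} for all i. -/
open Polynomial
open scoped Classical

/-- A numerical semigroup: a subset of `ℕ` containing `0`, closed under addition,
with finite complement in `ℕ`. -/
structure NumericalSemigroup where
  carrier : Set ℕ
  zero_mem : 0 ∈ carrier
  add_mem : ∀ ⦃a b : ℕ⦄, a ∈ carrier → b ∈ carrier → a + b ∈ carrier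
  finite_compl : Set.Finite carrierᶜ

namespace NumericalSemigroup

/-- The Hilbert series `H_S(x) = Σ_{s ∈ S} x^s`. -/
noncomputable def H (S : NumericalSemigroup) : PowerSeries ℤ :=
  PowerSeries.mk fun n => if n ∈ S.carrier then 1 else 0

/-- The Hilbert series evaluated at `x^w`: `H_S(x^w) = Σ_{s ∈ S} x^{w·s}`. -/
noncomputable def Hexp (S : NumericalSemigroup) (w : ℕ) : PowerSeries ℤ :=
  PowerSeries.mk fun n => if ∃ s ∈ S.carrier, n = w * s then 1 else 0

/-- The semigroup polynomial `P_S(x) = (1-x)·H_S(x) = 1 + (x-1)·Σ_{s ∉ S} x^s`. -/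
noncomputable def P (S : NumericalSemigroup) : Polynomial ℤ :=
  1 + (X - 1) * ∑ s ∈ S.finite_compl.toFinset, X ^ s

/-- The Frobenius number: the largest integer not in `S` (equal to `-1` when `S = ℕ`). -/
noncomputable def Frob (S : NumericalSemigroup) : ℤ :=
  (insert (-1 : ℤ) (S.finite_compl.toFinset.image fun n : ℕ => (n : ℤ))).max'
    (Finset.insert_nonempty _ _)

/-- The genus: the number of gaps of `S`. -/
noncomputable def genus (S : NumericalSemigroup) : ℕ := S.finite_compl.toFinset.card

/-- `S` viewed as a set of integers. -/
def intSet (S : NumericalSemigroup) : Set ℤ := (fun n : ℕ => (n : ℤ)) '' S.carrier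

/-- `S` is cyclotomic if every complex root of `P_S` lies in the closed unit disc. -/
def IsCyclotomicNS (S : NumericalSemigroup) : Prop :=
  ∀ z : ℂ, Polynomial.aeval z S.P = 0 → ‖z‖ ≤ 1

/-- `S` is symmetric if for every integer `z`, `z ∈ S ↔ F(S) - z ∉ S`. -/
def IsSymmetric (S : NumericalSemigroup) : Prop :=
  ∀ z : ℤ, z ∈ S.intSet ↔ S.Frob - z ∉ S.intSet

/-- The Apéry set of `S` with respect to `m`: elements `s ∈ S` with `s - m ∉ S`
(in particular all `s ∈ S` with `s < m`). -/
def Ap (S : NumericalSemigroup) (m : ℕ) : Set ℕ :=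
  {s ∈ S.carrier | ∀ t ∈ S.carrier, t + m ≠ s}

end NumericalSemigroup

/-!
All roots of `P_S` lie in the closed unit disc, and their product is `±P_S(0) = ±1` because `P_S`
is monic with `P_S(0) = 1`; hence every root lies on the unit circle, where `a⁻¹ = conj a`. The
reversed polynomial `∏ (1 - a x) = ∏ (-a) · ∏ (x - conj a)` is then `P_S(0)` times the complex
conjugate of `P_S`, which is `P_S` itself since its coefficients are real.
-/

theorem Multiset.eq_one_of_prod_eq_one_of_le_one {α : Type*} [CommMonoid α] [PartialOrder α]
    [MulLeftMono α] {s : Multiset α} (hle : ∀ a ∈ s, a ≤ 1) (hs : s.prod = 1) :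
    ∀ a ∈ s, a = 1 := by
  induction s using Multiset.induction with
  | empty => simp
  | cons b s ih =>
    have hle' : ∀ a ∈ s, a ≤ 1 := fun a ha => hle a (Multiset.mem_cons_of_mem ha)
    have hs_le : s.prod ≤ 1 := by simpa using s.prod_le_pow_card 1 hle'
    rw [Multiset.prod_cons] at hs
    have hb : b = 1 := eq_one_of_one_le_mul_left (hle b (Multiset.mem_cons_self b s)) hs_le hs.ge
    rw [hb, one_mul] at hs
    simpa [hb] using ih hle' hs

namespace Polynomial

theorem monic_sum_X_pow {R : Type*} [Semiring R] [Nontrivial R] {s : Finset ℕ} (hs : s.Nonempty) :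
    (∑ i ∈ s, (X : R[X]) ^ i).Monic := by
  refine monic_of_natDegree_le_of_coeff_eq_one (s.max' hs)
    (natDegree_sum_le_of_forall_le _ _ fun i hi => (natDegree_X_pow_le i).trans (s.le_max' i hi)) ?_
  simp [finsetSum_coeff, coeff_X_pow, s.max'_mem hs]

theorem reverse_multiset_prod {R : Type*} [CommSemiring R] [NoZeroDivisors R]
    (s : Multiset R[X]) : s.prod.reverse = (s.map reverse).prod := by
  induction s using Multiset.induction with
  | empty => simpa using reverse_C (1 : R)
  | cons p s ih =>
    rw [Multiset.prod_cons, reverse_mul_of_domain, ih, Multiset.map_cons, Multiset.prod_cons]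

theorem reverse_X_sub_C {R : Type*} [Ring R] [Nontrivial R] (a : R) :
    (X - C a).reverse = 1 - C a * X := by
  have hX : (X : R[X]).reverse = 1 := by
    rw [← one_mul X, reverse_mul_X, ← C_1, reverse_C]
  rw [sub_eq_add_neg, ← C_neg, reverse_add_C, hX]
  simp [sub_eq_add_neg]

theorem reverse_X_sub_C_of_norm_eq_one {a : ℂ} (ha : ‖a‖ = 1) :
    (X - C a).reverse = C (-a) * (X - C (starRingEnd ℂ a)) := by
  have hconj : a * starRingEnd ℂ a = 1 := by
    rw [Complex.mul_conj, Complex.normSq_eq_norm_sq, ha]; simp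
  rw [reverse_X_sub_C, mul_sub, ← C_mul, neg_mul, hconj]
  simp only [map_neg, map_one]
  ring

theorem Monic.norm_eq_one_of_mem_roots {K : Type*} [NormedField K] [IsAlgClosed K] {p : K[X]}
    (hp : p.Monic) (h0 : ‖p.coeff 0‖ = 1) (hdisc : ∀ z ∈ p.roots, ‖z‖ ≤ 1) :
    ∀ z ∈ p.roots, ‖z‖ = 1 := by
  have hprod : (p.roots.map (nnnormHom : K →*₀ NNReal)).prod = 1 := by
    rw [← map_multiset_prod]
    ext
    simpa [(IsAlgClosed.splits p).coeff_zero_eq_prod_roots_of_monic hp] using h0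
  have hle : ∀ r ∈ p.roots.map (nnnormHom : K →*₀ NNReal), r ≤ 1 :=
    Multiset.forall_mem_map_iff.2 fun z hz => NNReal.coe_le_one.1 (hdisc z hz)
  intro z hz
  exact congrArg NNReal.toReal
    (Multiset.eq_one_of_prod_eq_one_of_le_one hle hprod _ (Multiset.mem_map_of_mem _ hz))

theorem Monic.reverse_eq_C_coeff_zero_mul_map_conj {p : ℂ[X]} (hp : p.Monic)
    (hroots : ∀ z ∈ p.roots, ‖z‖ = 1) :
    p.reverse = C (p.coeff 0) * p.map (starRingEnd ℂ) := by
  have hsplit := IsAlgClosed.splits p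
  have hp_eq : p = (p.roots.map fun a => X - C a).prod := hsplit.eq_prod_roots_of_monic hp
  have hcoeff : p.coeff 0 = (p.roots.map Neg.neg).prod := by
    rw [hsplit.coeff_zero_eq_prod_roots_of_monic hp, Multiset.prod_map_neg,
      hsplit.natDegree_eq_card_roots]
  have hconj : p.map (starRingEnd ℂ) = (p.roots.map fun a => X - C (starRingEnd ℂ a)).prod := by
    conv_lhs => rw [hp_eq]
    simp [Polynomial.map_multiset_prod, Multiset.map_map]
  calc p.reverse = (p.roots.map fun a => C (-a) * (X - C (starRingEnd ℂ a))).prod := by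
        conv_lhs => rw [hp_eq]
        rw [reverse_multiset_prod, Multiset.map_map]
        exact congrArg _ (Multiset.map_congr rfl fun a ha =>
          reverse_X_sub_C_of_norm_eq_one (hroots a ha))
    _ = C (p.coeff 0) * p.map (starRingEnd ℂ) := by
        rw [Multiset.prod_map_mul, hcoeff, hconj, map_multiset_prod, Multiset.map_map]
        rfl

theorem Monic.reverse_eq_self_of_norm_root_le_one {p : ℤ[X]} (hp : p.Monic) (h0 : p.coeff 0 = 1)
    (hdisc : ∀ z : ℂ, aeval z p = 0 → ‖z‖ ≤ 1) : p.reverse = p := by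
  set q := p.map (Int.castRingHom ℂ)
  have hq : q.Monic := hp.map _
  have hq0 : q.coeff 0 = 1 := by simp [q, h0]
  have hqroots : ∀ z ∈ q.roots, ‖z‖ = 1 :=
    hq.norm_eq_one_of_mem_roots (by simp [hq0]) fun z hz =>
      hdisc z (by simpa [q, aeval_def, eval_map] using (mem_roots hq.ne_zero).1 hz)
  have hqconj : q.map (starRingEnd ℂ) = q := by
    rw [map_map, RingHom.ext_int ((starRingEnd ℂ).comp (Int.castRingHom ℂ)) (Int.castRingHom ℂ)]
  have hqrev : q.reverse = q := by
    rw [hq.reverse_eq_C_coeff_zero_mul_map_conj hqroots, hq0, hqconj, C_1, one_mul]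
  apply map_injective (Int.castRingHom ℂ) Int.cast_injective
  rw [reverse, ← reflect_map, ← hp.natDegree_map (Int.castRingHom ℂ)]
  exact hqrev

end Polynomial

namespace NumericalSemigroup

theorem P_coeff_zero (S : NumericalSemigroup) : S.P.coeff 0 = 1 := by
  have hgaps : ∀ s ∈ S.finite_compl.toFinset, (0 : ℤ) ^ s = 0 := fun s hs =>
    zero_pow fun h => by simp [h, S.zero_mem] at hs
  simp [coeff_zero_eq_eval_zero, P, eval_finsetSum, Finset.sum_eq_zero hgaps]

theorem P_monic (S : NumericalSemigroup) : S.P.Monic := by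
  rcases S.finite_compl.toFinset.eq_empty_or_nonempty with hempty | hne
  · simp [P, hempty]
  · have hg := monic_sum_X_pow (R := ℤ) hne
    have hX : ((X : ℤ[X]) - 1).Monic := by simpa using monic_X_sub_C (1 : ℤ)
    have hXg := hX.mul hg
    rw [P, add_comm]
    refine hXg.add_of_left ?_
    rw [degree_one, ← natDegree_pos_iff_degree_pos, hX.natDegree_mul hg, ← C_1, natDegree_X_sub_C]
    omega

end NumericalSemigroup

open NumericalSemigroup in
/-- If `S` is cyclotomic, then `P_S` is selfreciprocal: the coefficient of `x^i` equals
the coefficient of `x^{deg P_S - i}` for all `0 ≤ i ≤ deg P_S`. -/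
theorem cyclotomic_selfreciprocal (S : NumericalSemigroup) (h : S.IsCyclotomicNS) :
    ∀ i ≤ S.P.natDegree, S.P.coeff i = S.P.coeff (S.P.natDegree - i) := by
  intro i hi
  conv_lhs => rw [← S.P_monic.reverse_eq_self_of_norm_root_le_one S.P_coeff_zero h]
  rw [coeff_reverse, revAt_le hi]
end

section
/- Let a_1, a_2 ≥ 2 be coprime integers and let S = ⟨a_1, a_2⟩. Then (1−x^{a_1})(1−x^{a_2})·P_S(x) = (1−x)(1−x^{a_1 a_2}) as polynomials, and consequently P_S(x) = ∏ Φ_d(x), where the product is over all positive integers d dividing a_1 a_2 such that d divides neither a_1 nor a_2. -/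
open Polynomial
open scoped Classical

/-!
Since `a₁ ∈ S`, the Apéry set `Ap(S, a₁) = {s ∈ S | s - a₁ ∉ S}` satisfies
`(1 - x^{a₁}) H_S(x) = Σ_{w ∈ Ap(S, a₁)} x^w`, and for `S = ⟨a₁, a₂⟩` with `a₁, a₂` coprime this
Apéry set is `{j a₂ | j < a₁}`. Hence `(1 - x^{a₁}) H_S(x)` is the geometric sum
`(1 - x^{a₁ a₂}) / (1 - x^{a₂})`, and multiplying by `1 - x` gives the first identity. Writing
`x^n - 1 = ∏_{d ∣ n} Φ_d`, the cyclotomic factors of `(1 - x)(1 - x^{a₁a₂})` that are not accounted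
for by `(1 - x^{a₁})(1 - x^{a₂})` are exactly the `Φ_d` with `d ∣ a₁a₂`, `d ∤ a₁`, `d ∤ a₂`.
-/

namespace PowerSeries

theorem sum_X_pow_eq_mk_ite {R : Type*} [Semiring R] (s : Finset ℕ) :
    ∑ i ∈ s, (X : R⟦X⟧) ^ i = mk fun n => if n ∈ s then 1 else 0 := by
  ext n
  simp [coeff_X_pow]

end PowerSeries

namespace NumericalSemigroup

theorem coe_P (S : NumericalSemigroup) : (S.P : PowerSeries ℤ) = (1 - PowerSeries.X) * S.H := by
  have hgaps : S.H + PowerSeries.mk (fun n => if n ∈ S.finite_compl.toFinset then 1 else 0) =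
      PowerSeries.mk 1 := by
    ext n
    by_cases hn : n ∈ S.carrier <;> simp [H, hn]
  rw [P, eq_sub_of_add_eq hgaps, ← PowerSeries.sum_X_pow_eq_mk_ite,
    ← Polynomial.coeToPowerSeries.ringHom_apply, map_add, map_mul, map_sum]
  simp only [map_sub, map_pow, map_one, Polynomial.coeToPowerSeries.ringHom_apply,
    Polynomial.coe_X]
  linear_combination -PowerSeries.mk_one_mul_one_sub_eq_one (S := ℤ)

theorem mem_Ap_iff (S : NumericalSemigroup) {m n : ℕ} :
    n ∈ S.Ap m ↔ n ∈ S.carrier ∧ ¬(m ≤ n ∧ n - m ∈ S.carrier) := by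
  refine and_congr_right fun _ => ⟨fun h ⟨hmn, hS⟩ => h _ hS (Nat.sub_add_cancel hmn), ?_⟩
  rintro h t ht rfl
  exact h ⟨Nat.le_add_left m t, by simpa using ht⟩

theorem one_sub_X_pow_mul_H {S : NumericalSemigroup} {m : ℕ} (hm : m ∈ S.carrier) :
    (1 - PowerSeries.X ^ m) * S.H = PowerSeries.mk fun n => if n ∈ S.Ap m then 1 else 0 := by
  ext n
  rw [sub_mul, one_mul, map_sub, PowerSeries.coeff_X_pow_mul', PowerSeries.coeff_mk, mem_Ap_iff]
  by_cases hmn : m ≤ n ∧ n - m ∈ S.carrier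
  · have hn : n ∈ S.carrier := Nat.sub_add_cancel hmn.1 ▸ S.add_mem hmn.2 hm
    simp [H, hmn, hn]
  · by_cases hm : m ≤ n <;> simp_all [H]

section TwoGenerators

variable {a b : ℕ} {S : NumericalSemigroup}

theorem mem_iff_of_eq_closure_pair (hS : S.carrier = ↑(AddSubmonoid.closure ({a, b} : Set ℕ)))
    {n : ℕ} : n ∈ S.carrier ↔ ∃ i j : ℕ, i * a + j * b = n := by
  simpa [hS, smul_eq_mul] using AddSubmonoid.mem_closure_pair a b n

theorem Ap_eq_of_eq_closure_pair (hb : 0 < b) (hab : a.Coprime b)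
    (hS : S.carrier = ↑(AddSubmonoid.closure ({a, b} : Set ℕ))) :
    S.Ap a = ↑((Finset.range a).image (· * b)) := by
  ext n
  simp only [Ap, Set.mem_ofPred_eq, Finset.coe_image, Finset.coe_range, Set.mem_image,
    Set.mem_Iio, mem_iff_of_eq_closure_pair hS]
  constructor
  · rintro ⟨⟨i, j, rfl⟩, hAp⟩
    obtain rfl : i = 0 := by
      by_contra hi
      obtain ⟨i, rfl⟩ := Nat.exists_eq_add_one_of_ne_zero hi
      exact hAp _ ⟨i, j, rfl⟩ (by ring)
    refine ⟨j, lt_of_not_ge fun hj => ?_, by simp⟩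
    obtain ⟨j, rfl⟩ := Nat.exists_eq_add_of_le' hj
    obtain ⟨b, rfl⟩ := Nat.exists_eq_add_of_lt hb
    exact hAp _ ⟨b, j, rfl⟩ (by ring)
  · rintro ⟨j, hj, rfl⟩
    refine ⟨⟨0, j, by simp⟩, ?_⟩
    rintro t ⟨i, k, rfl⟩ heq
    -- `(i + 1) a = (j - k) b` with `0 < j - k < a` contradicts `a ∣ (j - k) b`
    have hkj : k < j := by nlinarith
    have hdvd : a ∣ (j - k) * b :=
      ⟨i + 1, by rw [Nat.sub_mul, ← heq, Nat.add_right_comm, Nat.add_sub_cancel]; ring⟩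
    have := Nat.le_of_dvd (by omega) (hab.dvd_of_dvd_mul_right hdvd)
    omega

theorem one_sub_X_pow_mul_H_of_eq_closure_pair (hb : 0 < b) (hab : a.Coprime b)
    (hS : S.carrier = ↑(AddSubmonoid.closure ({a, b} : Set ℕ))) :
    (1 - PowerSeries.X ^ a) * S.H = ∑ j ∈ Finset.range a, PowerSeries.X ^ (j * b) := by
  have ha : a ∈ S.carrier := hS ▸ AddSubmonoid.subset_closure (Set.mem_insert a {b})
  rw [one_sub_X_pow_mul_H ha, Ap_eq_of_eq_closure_pair hb hab hS,
    ← Finset.sum_image fun i _ j _ h => Nat.eq_of_mul_eq_mul_right hb h,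
    PowerSeries.sum_X_pow_eq_mk_ite]
  simp only [Finset.mem_coe]

theorem one_sub_X_pow_mul_one_sub_X_pow_mul_P_of_eq_closure_pair (hb : 0 < b) (hab : a.Coprime b)
    (hS : S.carrier = ↑(AddSubmonoid.closure ({a, b} : Set ℕ))) :
    (1 - (X : ℤ[X]) ^ a) * (1 - X ^ b) * S.P = (1 - X) * (1 - X ^ (a * b)) := by
  apply Polynomial.coe_injective
  push_cast
  rw [coe_P]
  have hAp := one_sub_X_pow_mul_H_of_eq_closure_pair hb hab hS
  simp only [pow_mul'] at hAp
  linear_combination (1 - PowerSeries.X) * (1 - PowerSeries.X ^ b) * hAp +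
    (1 - PowerSeries.X) * mul_neg_geom_sum (PowerSeries.X ^ b : PowerSeries ℤ) a

end TwoGenerators

end NumericalSemigroup

namespace Polynomial

theorem X_pow_sub_one_mul_X_pow_sub_one_mul_prod_cyclotomic {a b : ℕ} (ha : 0 < a) (hb : 0 < b)
    (hab : a.Coprime b) (R : Type*) [CommRing R] :
    (X ^ a - 1) * (X ^ b - 1) *
        ∏ d ∈ (a * b).divisors.filter (fun d => ¬ d ∣ a ∧ ¬ d ∣ b), cyclotomic d R =
      (X - 1) * (X ^ (a * b) - 1) := by
  have hsplit := Finset.prod_filter_mul_prod_filter_not ((a * b).divisors \ a.divisors)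
    (· ∣ b) (cyclotomic · R)
  have hdvd_b : ((a * b).divisors \ a.divisors).filter (· ∣ b) = b.divisors.erase 1 := by
    ext d
    simp only [Finset.mem_filter, Finset.mem_sdiff, Finset.mem_erase, Nat.mem_divisors]
    constructor
    · rintro ⟨⟨-, h⟩, hd⟩
      exact ⟨by rintro rfl; simp_all, hd, hb.ne'⟩
    · rintro ⟨h1, hd, -⟩
      refine ⟨⟨⟨hd.mul_left a, by positivity⟩, fun h => ?_⟩, hd⟩
      exact h1 (Nat.eq_one_of_dvd_coprimes hab h.1 hd)
  have hndvd_b : ((a * b).divisors \ a.divisors).filter (¬ · ∣ b) =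
      (a * b).divisors.filter (fun d => ¬ d ∣ a ∧ ¬ d ∣ b) := by
    ext d
    simp only [Finset.mem_filter, Finset.mem_sdiff, Nat.mem_divisors, ne_eq, ha.ne',
      not_false_eq_true, and_true]
    tauto
  rw [hdvd_b, hndvd_b] at hsplit
  calc (X ^ a - 1) * (X ^ b - 1) *
        ∏ d ∈ (a * b).divisors.filter (fun d => ¬ d ∣ a ∧ ¬ d ∣ b), cyclotomic d R
      = (X - 1) * ((X ^ a - 1) * ((∏ d ∈ b.divisors.erase 1, cyclotomic d R) *
          ∏ d ∈ (a * b).divisors.filter (fun d => ¬ d ∣ a ∧ ¬ d ∣ b), cyclotomic d R)) := by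
        rw [← prod_cyclotomic_eq_X_pow_sub_one hb,
          ← Finset.mul_prod_erase _ _ (Nat.one_mem_divisors.mpr hb.ne'), cyclotomic_one]
        ring
    _ = (X - 1) * (X ^ (a * b) - 1) := by
      rw [hsplit, X_pow_sub_one_mul_prod_cyclotomic_eq_X_pow_sub_one_of_dvd R
        (Nat.dvd_mul_right a b) (by positivity)]

end Polynomial

open NumericalSemigroup in
/-- For coprime `a₁, a₂ ≥ 2` and `S = ⟨a₁, a₂⟩`:
`(1-x^{a₁})(1-x^{a₂})·P_S(x) = (1-x)(1-x^{a₁a₂})`, and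
`P_S = ∏ Φ_d` over all `d ∣ a₁a₂` with `d ∤ a₁` and `d ∤ a₂`. -/
theorem semigroupPolynomial_two_generators (a₁ a₂ : ℕ) (h₁ : 2 ≤ a₁) (h₂ : 2 ≤ a₂)
    (hcop : Nat.Coprime a₁ a₂) (S : NumericalSemigroup)
    (hS : S.carrier = ↑(AddSubmonoid.closure ({a₁, a₂} : Set ℕ))) :
    (1 - (X : Polynomial ℤ) ^ a₁) * (1 - (X : Polynomial ℤ) ^ a₂) * S.P
        = (1 - X) * (1 - X ^ (a₁ * a₂)) ∧
    S.P = ∏ d ∈ (a₁ * a₂).divisors.filter fun d => ¬ d ∣ a₁ ∧ ¬ d ∣ a₂,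
        Polynomial.cyclotomic d ℤ := by
  have ha₁ : 0 < a₁ := by omega
  have ha₂ : 0 < a₂ := by omega
  have hP := one_sub_X_pow_mul_one_sub_X_pow_mul_P_of_eq_closure_pair ha₂ hcop hS
  have hcyc := X_pow_sub_one_mul_X_pow_sub_one_mul_prod_cyclotomic ha₁ ha₂ hcop ℤ
  have hne : (X ^ a₁ - 1 : ℤ[X]) * (X ^ a₂ - 1) ≠ 0 := by
    simpa using mul_ne_zero (X_pow_sub_C_ne_zero ha₁ (1 : ℤ)) (X_pow_sub_C_ne_zero ha₂ (1 : ℤ))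
  exact ⟨hP, mul_left_cancel₀ hne (by linear_combination hP - hcyc)⟩
end

section
/- Let n ≥ 2 and let (a_1, ..., a_n) be a smooth sequence of relatively prime positive integers, and let S = ⟨a_1, ..., a_n⟩. Then ∏_{i=1}^n (1−x^{a_i}) · P_S(x) = (1−x) · ∏_{i=2}^n (1−x^{c_i a_i}) as polynomials, where c_i = gcd(a_1,...,a_{i−1}) / gcd(a_1,...,a_i). -/
/-!
Write `H_k` for the series `Σ_{s ∈ S_k} x^s` of `S_k = ⟨a_1, …, a_k⟩`; for `k < n` this `S_k` need
not be a numerical semigroup, so we work with the power series of arbitrary subsets of `ℕ`.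
Smoothness gives every `s ∈ S_k` a unique representation `s = t + j a_k` with `t ∈ S_{k-1}` and
`j < c_k`: it exists because `c_k a_k ∈ S_{k-1}` lets us reduce the coefficient of `a_k` modulo
`c_k`, and it is unique because `d_{k-1}` divides every element of `S_{k-1}` and
`c_k = d_{k-1} / gcd(d_{k-1}, a_k)`. Hence `H_k = H_{k-1} (1 + x^{a_k} + ⋯ + x^{(c_k - 1) a_k})`,
that is `(1 - x^{a_k}) H_k = (1 - x^{c_k a_k}) H_{k-1}`, while `(1 - x^{a_1}) H_1 = 1`.
Telescoping, and `P_S = (1 - x) H_S`, give the identity.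
-/

open Polynomial
open scoped Classical

/-- `d_k = gcd(a_1, …, a_k)`. -/
def dseq (a : ℕ → ℕ) (k : ℕ) : ℕ := (Finset.Icc 1 k).gcd a

/-- `c_k = d_{k-1} / d_k`. -/
def cseq (a : ℕ → ℕ) (k : ℕ) : ℕ := dseq a (k - 1) / dseq a k

/-- The numerical semigroup (as a set) generated by `a_1, …, a_k`. -/
def gen (a : ℕ → ℕ) (k : ℕ) : Set ℕ := ↑(AddSubmonoid.closure (a '' Set.Icc 1 k))

/-- The sequence `(a_1, …, a_n)` is smooth if `c_k·a_k ∈ ⟨a_1, …, a_{k-1}⟩` for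
every `k = 2, …, n`. -/
def SmoothSeq (a : ℕ → ℕ) (n : ℕ) : Prop :=
  ∀ k, 2 ≤ k → k ≤ n → cseq a k * a k ∈ gen a (k - 1)

noncomputable def indicatorSeries (A : Set ℕ) : PowerSeries ℤ :=
  PowerSeries.mk fun m => if m ∈ A then 1 else 0

@[simp]
lemma coeff_indicatorSeries (A : Set ℕ) (m : ℕ) :
    PowerSeries.coeff m (indicatorSeries A) = if m ∈ A then 1 else 0 :=
  PowerSeries.coeff_mk _ _

lemma indicatorSeries_singleton_zero : indicatorSeries {0} = 1 := by
  ext m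
  simp [PowerSeries.coeff_one]

lemma indicatorSeries_add_indicatorSeries_compl (A : Set ℕ) :
    indicatorSeries A + indicatorSeries Aᶜ = PowerSeries.mk 1 := by
  ext m
  by_cases h : m ∈ A <;> simp [h]

lemma indicatorSeries_coe_finset (s : Finset ℕ) :
    indicatorSeries s = ((∑ i ∈ s, X ^ i : ℤ[X]) : PowerSeries ℤ) := by
  ext m
  simp [Polynomial.coeff_coe, Polynomial.coeff_X_pow]

lemma indicatorSeries_setOf_dvd_mul_one_sub_X_pow {b : ℕ} (hb : 0 < b) :
    indicatorSeries {m | b ∣ m} * (1 - PowerSeries.X ^ b) = 1 := by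
  ext m
  rw [mul_sub, mul_one, map_sub, PowerSeries.coeff_mul_X_pow', PowerSeries.coeff_one]
  by_cases hbm : b ≤ m
  · have hm : m ≠ 0 := by omega
    have hsub : b ∣ m - b ↔ b ∣ m := Nat.dvd_sub_iff_left hbm dvd_rfl
    by_cases hdvd : b ∣ m <;> simp [hbm, hm, hdvd, hsub]
  · have hdvd : b ∣ m ↔ m = 0 :=
      ⟨fun h => Nat.eq_zero_of_dvd_of_lt h (by omega), fun h => h ▸ dvd_zero b⟩
    simp [hbm, hdvd]

lemma indicatorSeries_eq_mul_geom_sum {A B : Set ℕ} {b c : ℕ}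
    (hA : ∀ m, m ∈ A ↔ ∃ j < c, ∃ t ∈ B, m = t + j * b)
    (huniq : ∀ j < c, ∀ j' < c, ∀ t ∈ B, ∀ t' ∈ B, t + j * b = t' + j' * b → j = j') :
    indicatorSeries A = indicatorSeries B * ∑ j ∈ Finset.range c, PowerSeries.X ^ (j * b) := by
  ext m
  have hsummand (j : ℕ) : PowerSeries.coeff m (indicatorSeries B * PowerSeries.X ^ (j * b))
      = if ∃ t ∈ B, m = t + j * b then 1 else 0 := by
    have hiff : (∃ t ∈ B, m = t + j * b) ↔ j * b ≤ m ∧ m - j * b ∈ B :=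
      ⟨by rintro ⟨t, ht, rfl⟩; simpa using ht, fun ⟨hle, hB⟩ => ⟨_, hB, by omega⟩⟩
    rw [PowerSeries.coeff_mul_X_pow', coeff_indicatorSeries, hiff]
    by_cases h : j * b ≤ m <;> simp [h]
  rw [Finset.mul_sum, map_sum, coeff_indicatorSeries]
  simp only [hsummand]
  split_ifs with hm
  · obtain ⟨j, hj, t, ht, rfl⟩ := (hA m).1 hm
    symm
    rw [Finset.sum_eq_single_of_mem j (Finset.mem_range.2 hj)]
    · simp [ht]
    · rintro j' hj' hne
      refine if_neg fun ⟨t', ht', heq⟩ => hne ?_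
      exact huniq j' (Finset.mem_range.1 hj') j hj t' ht' t ht heq.symm
  · refine (Finset.sum_eq_zero fun j hj => ?_).symm
    rw [if_neg]
    rintro ⟨t, ht, heq⟩
    exact hm ((hA m).2 ⟨j, Finset.mem_range.1 hj, t, ht, heq⟩)

lemma eq_of_add_mul_eq_add_mul_of_dvd {d b t t' j j' : ℕ} (ht : d ∣ t) (ht' : d ∣ t')
    (hj : j < d / d.gcd b) (hj' : j' < d / d.gcd b) (h : t + j * b = t' + j' * b) :
    j = j' := by
  have hd : 0 < d := Nat.pos_of_ne_zero fun hd => by simp [hd] at hj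
  have hmod : j * b ≡ j' * b [MOD d] :=
    calc j * b = 0 + j * b := (zero_add _).symm
      _ ≡ t + j * b [MOD d] := ((Nat.modEq_zero_iff_dvd.2 ht).symm).add_right _
      _ = t' + j' * b := h
      _ ≡ 0 + j' * b [MOD d] := (Nat.modEq_zero_iff_dvd.2 ht').add_right _
      _ = j' * b := zero_add _
  exact (hmod.cancel_right_div_gcd hd).eq_of_lt_of_lt hj hj'

section Generators

variable {a : ℕ → ℕ} {k m : ℕ}

lemma gen_zero : gen a 0 = {0} := by
  simp [gen]

lemma gen_one : gen a 1 = {m | a 1 ∣ m} := by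
  ext m
  simp [gen, AddSubmonoid.mem_closure_singleton, Dvd.dvd, eq_comm, mul_comm]

lemma mem_gen_succ_iff : m ∈ gen a (k + 1) ↔ ∃ t ∈ gen a k, ∃ i, m = t + i * a (k + 1) := by
  rw [gen, ← Set.insert_Icc_right_eq_Icc_add_one (by omega), Set.image_insert_eq,
    Set.insert_eq, AddSubmonoid.closure_union, SetLike.mem_coe, AddSubmonoid.mem_sup]
  simp only [AddSubmonoid.mem_closure_singleton, smul_eq_mul]
  constructor
  · rintro ⟨_, ⟨i, rfl⟩, t, ht, rfl⟩
    exact ⟨t, ht, i, add_comm _ _⟩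
  · rintro ⟨t, ht, i, rfl⟩
    exact ⟨_, ⟨i, rfl⟩, t, ht, add_comm _ _⟩

lemma dseq_dvd_of_mem_gen (hm : m ∈ gen a k) : dseq a k ∣ m := by
  refine AddSubmonoid.closure_induction ?_ (dvd_zero _) (fun _ _ _ _ => dvd_add) hm
  rintro _ ⟨i, hi, rfl⟩
  exact Finset.gcd_dvd (by simpa using hi)

lemma dseq_succ : dseq a (k + 1) = Nat.gcd (dseq a k) (a (k + 1)) := by
  rw [dseq, ← Finset.insert_Icc_right_eq_Icc_add_one (by omega), Finset.gcd_insert, Nat.gcd_comm]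
  rfl

lemma cseq_succ : cseq a (k + 1) = dseq a k / Nat.gcd (dseq a k) (a (k + 1)) := by
  rw [cseq, dseq_succ, Nat.add_sub_cancel]

lemma dseq_pos (h1 : 0 < a 1) (hk : 1 ≤ k) : 0 < dseq a k := by
  refine Nat.pos_of_ne_zero fun h => h1.ne' ?_
  exact Finset.gcd_eq_zero_iff.1 h 1 (by simp [hk])

lemma cseq_succ_pos (h1 : 0 < a 1) (hk : 1 ≤ k) : 0 < cseq a (k + 1) := by
  have hd := dseq_pos h1 hk
  rw [cseq_succ]
  exact Nat.div_pos (Nat.gcd_le_left _ hd) (Nat.gcd_pos_of_pos_left _ hd)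

lemma exists_lt_cseq_of_mem_gen_succ (hc : 0 < cseq a (k + 1))
    (hsmooth : cseq a (k + 1) * a (k + 1) ∈ gen a k) (hm : m ∈ gen a (k + 1)) :
    ∃ j < cseq a (k + 1), ∃ t ∈ gen a k, m = t + j * a (k + 1) := by
  obtain ⟨t, ht, i, rfl⟩ := mem_gen_succ_iff.1 hm
  set c := cseq a (k + 1)
  refine ⟨i % c, Nat.mod_lt _ hc, t + (i / c) • (c * a (k + 1)), ?_, ?_⟩
  · exact AddSubmonoid.add_mem _ ht (AddSubmonoid.nsmul_mem _ hsmooth _)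
  · conv_lhs => rw [← Nat.div_add_mod i c]
    rw [smul_eq_mul]
    ring

end Generators

lemma indicatorSeries_gen_succ_mul {a : ℕ → ℕ} {k : ℕ} (h1 : 0 < a 1) (hk : 1 ≤ k)
    (hsmooth : cseq a (k + 1) * a (k + 1) ∈ gen a k) :
    indicatorSeries (gen a (k + 1)) * (1 - PowerSeries.X ^ a (k + 1))
      = indicatorSeries (gen a k) * (1 - PowerSeries.X ^ (cseq a (k + 1) * a (k + 1))) := by
  have hdecomp : indicatorSeries (gen a (k + 1)) = indicatorSeries (gen a k) *
      ∑ j ∈ Finset.range (cseq a (k + 1)), PowerSeries.X ^ (j * a (k + 1)) := by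
    refine indicatorSeries_eq_mul_geom_sum (fun m => ⟨?_, ?_⟩) ?_
    · exact exists_lt_cseq_of_mem_gen_succ (cseq_succ_pos h1 hk) hsmooth
    · rintro ⟨j, -, t, ht, rfl⟩
      exact mem_gen_succ_iff.2 ⟨t, ht, j, rfl⟩
    · intro j hj j' hj' t ht t' ht'
      rw [cseq_succ] at hj hj'
      exact eq_of_add_mul_eq_add_mul_of_dvd (dseq_dvd_of_mem_gen ht) (dseq_dvd_of_mem_gen ht')
        hj hj'
  simp only [hdecomp, mul_assoc, pow_mul', geom_sum_mul_neg]

lemma prod_mul_indicatorSeries_gen {a : ℕ → ℕ} {n : ℕ} (h1 : 0 < a 1) (hsmooth : SmoothSeq a n) :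
    ∀ k ≤ n, (∏ i ∈ Finset.Icc 1 k, (1 - PowerSeries.X ^ a i)) * indicatorSeries (gen a k)
      = ∏ i ∈ Finset.Icc 2 k, (1 - PowerSeries.X ^ (cseq a i * a i))
  | 0, _ => by simp [gen_zero, indicatorSeries_singleton_zero]
  | 1, _ => by simpa [gen_one, mul_comm] using indicatorSeries_setOf_dvd_mul_one_sub_X_pow h1
  | k + 1 + 1, hk => by
    rw [Finset.prod_Icc_succ_top (a := 1) (by omega), Finset.prod_Icc_succ_top (a := 2) (by omega),
      ← prod_mul_indicatorSeries_gen h1 hsmooth (k + 1) (by omega), mul_right_comm, mul_assoc,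
      indicatorSeries_gen_succ_mul (k := k + 1) h1 (by omega) (hsmooth (k + 1 + 1) (by omega) hk),
      ← mul_assoc]

lemma NumericalSemigroup.coe_P_s8 (S : NumericalSemigroup) :
    (S.P : PowerSeries ℤ) = (1 - PowerSeries.X) * S.H := by
  have hgaps : indicatorSeries S.carrierᶜ
      = ((∑ s ∈ S.finite_compl.toFinset, X ^ s : ℤ[X]) : PowerSeries ℤ) := by
    rw [← indicatorSeries_coe_finset, Set.Finite.coe_toFinset]
  have hH : S.H = PowerSeries.mk 1 - indicatorSeries S.carrierᶜ := by
    rw [← indicatorSeries_add_indicatorSeries_compl S.carrier, add_sub_cancel_right]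
    rfl
  rw [hH, hgaps, NumericalSemigroup.P]
  push_cast
  linear_combination -PowerSeries.mk_one_mul_one_sub_eq_one ℤ

open NumericalSemigroup in
theorem semigroupPolynomial_smooth_general (n : ℕ) (hn : 2 ≤ n) (a : ℕ → ℕ)
    (hpos : ∀ i, 1 ≤ i → i ≤ n → 0 < a i) (hsmooth : SmoothSeq a n)
    (S : NumericalSemigroup) (hS : S.carrier = gen a n) :
    (∏ i ∈ Finset.Icc 1 n, (1 - (X : Polynomial ℤ) ^ a i)) * S.P
      = (1 - X) * ∏ i ∈ Finset.Icc 2 n, (1 - (X : Polynomial ℤ) ^ (cseq a i * a i)) := by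
  have h1 : 0 < a 1 := hpos 1 le_rfl (by omega)
  have hH : S.H = indicatorSeries (gen a n) := by rw [← hS]; rfl
  apply Polynomial.coe_injective ℤ
  simp only [← Polynomial.coeToPowerSeries.ringHom_apply, map_mul, map_prod, map_sub, map_one,
    map_pow]
  simp only [Polynomial.coeToPowerSeries.ringHom_apply, Polynomial.coe_X, coe_P_s8, hH]
  rw [mul_left_comm, prod_mul_indicatorSeries_gen h1 hsmooth n le_rfl]

open NumericalSemigroup in
/-- For a smooth sequence `(a_1, …, a_n)` of relatively prime positive integers and
`S = ⟨a_1, …, a_n⟩`: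
`∏_{i=1}^n (1-x^{a_i}) · P_S(x) = (1-x) · ∏_{i=2}^n (1-x^{c_i a_i})`. -/
theorem semigroupPolynomial_smooth (n : ℕ) (hn : 2 ≤ n) (a : ℕ → ℕ)
    (hpos : ∀ i, 1 ≤ i → i ≤ n → 0 < a i) (hgcd : dseq a n = 1) (hsmooth : SmoothSeq a n)
    (S : NumericalSemigroup) (hS : S.carrier = gen a n) :
    (∏ i ∈ Finset.Icc 1 n, (1 - (X : Polynomial ℤ) ^ a i)) * S.P
      = (1 - X) * ∏ i ∈ Finset.Icc 2 n, (1 - (X : Polynomial ℤ) ^ (cseq a i * a i)) :=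
  semigroupPolynomial_smooth_general n hn a hpos hsmooth S hS
end

section
/- Let p and q be distinct primes and n a positive integer. If T is a cyclotomic numerical semigroup of depth p^n q and height 1, then T = ⟨p^n, q⟩. -/
open Polynomial
open scoped Classical

open NumericalSemigroup in
/-- A cyclotomic numerical semigroup `S` has depth `d` and height `h` if
`P_S ∣ (x^d-1)^h`, `P_S` does not divide `(x^n-1)^{h-1}` for any positive `n`, and
`P_S` does not divide `(x^{d₁}-1)^h` for any proper divisor `d₁` of `d`. -/
def HasDepthHeight (S : NumericalSemigroup) (d h : ℕ) : Prop :=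
  S.P ∣ ((X : Polynomial ℤ) ^ d - 1) ^ h ∧
  (∀ n : ℕ, 0 < n → ¬ S.P ∣ ((X : Polynomial ℤ) ^ n - 1) ^ (h - 1)) ∧
  (∀ d₁ : ℕ, d₁ ∣ d → d₁ < d → ¬ S.P ∣ ((X : Polynomial ℤ) ^ d₁ - 1) ^ h)

/-! Since `P_T` divides `x^{p^n q} - 1` and `P_T(1) = 1`, it is a product of distinct cyclotomic
polynomials `Φ_{q p^i}` with `1 ≤ i ≤ n`, and depth minimality makes `n` the largest index.
No smaller index is missing: if `j` is the first missing one and `a > j` the next present one,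
put `c = p^{j-1}` and `M = p^{a-1}`. The factors below `j` give
`∏_{i<j} Φ_{q p^i} · (1 + x + ⋯ + x^{c-1}) = 1 + x^q + ⋯ + x^{q(c-1)}`, and the remaining ones
are `≡ 1 - x^M` modulo `x^{M+1}`. As the `x^m`-coefficient of `P_T · (1 + x + ⋯ + x^{c-1})` is
`[m ∈ T] - [m - c ∈ T]`, comparing coefficients at `c` and `M` gives `c ∈ T`, `M - c ∈ T` and
`M ∉ T`. Hence `P_T = ∏_{i=1}^n Φ_{q p^i} = Φ_q(x^{p^n}) / Φ_q(x)`, that is,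
`P_T · (1 + x + ⋯ + x^{q-1}) = 1 + x^{p^n} + ⋯ + x^{(q-1) p^n}`, a recurrence for the
indicator of `T` that characterises `⟨p^n, q⟩`. -/

open Polynomial Finset

theorem dvd_prod_sub_of_dvd_sub {ι R : Type*} [CommRing R] [DecidableEq ι] {x g : R}
    {s : Finset ι} {f : ι → R} {a : ι} (ha : a ∈ s) (hfa : x ∣ f a - g)
    (hf : ∀ i ∈ s.erase a, x ∣ f i - 1) : x ∣ ∏ i ∈ s, f i - g := by
  simp only [← Ideal.mem_span_singleton, ← Ideal.Quotient.mk_eq_mk_iff_sub_mem] at *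
  rw [map_prod, ← mul_prod_erase s _ ha, hfa, prod_congr rfl hf, map_one, prod_const_one, mul_one]

namespace Polynomial

variable {p q : ℕ}

theorem expand_prime_pow_cyclotomic (R : Type*) [CommRing R] (hp : p.Prime) {n : ℕ}
    (hn : p ∣ n) (m : ℕ) : expand R (p ^ m) (cyclotomic n R) = cyclotomic (n * p ^ m) R := by
  induction m with
  | zero => simp
  | succ m ih =>
    rw [pow_succ', ← expand_expand, ih,
      cyclotomic_expand_eq_cyclotomic hp (dvd_mul_of_dvd_left hn _)]
    ring_nf

theorem prod_cyclotomic_mul_cyclotomic_eq_expand (R : Type*) [CommRing R] (hp : p.Prime)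
    {n : ℕ} (hn : ¬p ∣ n) (m : ℕ) :
    (∏ i ∈ range m, cyclotomic (n * p ^ (i + 1)) R) * cyclotomic n R =
      expand R (p ^ m) (cyclotomic n R) := by
  induction m with
  | zero => simp
  | succ m ih =>
    rw [prod_range_succ, mul_right_comm, ih, pow_succ, ← expand_expand,
      cyclotomic_expand_eq_cyclotomic_mul hp hn, map_mul,
      expand_prime_pow_cyclotomic R hp (dvd_mul_left p n), mul_comm]
    ring_nf

theorem prod_cyclotomic_mul_eq_X_pow_sub_one (R : Type*) [CommRing R] (hp : p.Prime)
    (hq : q.Prime) (hpq : p ≠ q) (m : ℕ) :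
    (∏ i ∈ range m, cyclotomic (q * p ^ (i + 1)) R) * (cyclotomic q R * (X ^ p ^ m - 1)) =
      X ^ (p ^ m * q) - 1 := by
  have := Fact.mk hq
  have hexp := congrArg (expand R (p ^ m)) (cyclotomic_prime_mul_X_sub_one R q)
  simp only [map_mul, map_sub, map_pow, map_one, expand_X, ← pow_mul] at hexp
  rw [← mul_assoc, prod_cyclotomic_mul_cyclotomic_eq_expand R hp
    (mt (Nat.prime_dvd_prime_iff_eq hp hq).1 hpq), hexp, mul_comm]

theorem prod_cyclotomic_mul_X_pow_sub_one_mul (R : Type*) [CommRing R] (hp : p.Prime)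
    (hq : q.Prime) (hpq : p ≠ q) (m : ℕ) :
    (∏ i ∈ range m, cyclotomic (q * p ^ (i + 1)) R) * ((X ^ p ^ m - 1) * (X ^ q - 1)) =
      (X ^ (p ^ m * q) - 1) * (X - 1) := by
  have := Fact.mk hq
  rw [← prod_cyclotomic_mul_eq_X_pow_sub_one R hp hq hpq, ← cyclotomic_prime_mul_X_sub_one R q]
  ring

theorem mul_geom_sum_eq_expand {R : Type*} [CommRing R] [IsDomain R] {Q : R[X]} {a b : ℕ}
    (hb : 0 < b) (h : Q * ((X ^ a - 1) * (X ^ b - 1)) = (X ^ (a * b) - 1) * (X - 1)) :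
    Q * ∑ i ∈ range a, X ^ i = expand R b (∑ i ∈ range a, X ^ i) := by
  have hXb : (X ^ b - 1 : R[X]) ≠ 0 := by simpa using X_pow_sub_C_ne_zero hb (1 : R)
  have hX : (X - 1 : R[X]) ≠ 0 := by simpa using X_sub_C_ne_zero (1 : R)
  apply mul_right_cancel₀ (mul_ne_zero hXb hX)
  have hexp := congrArg (expand R b) (geom_sum_mul (X : R[X]) a)
  simp only [map_mul, map_sub, map_pow, map_one, expand_X, ← pow_mul] at hexp
  linear_combination (Q * (X ^ b - 1)) * geom_sum_mul (X : R[X]) a + h - (X - 1) * hexp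

theorem X_sq_dvd_cyclotomic_mul_sub (hp : p.Prime) (hq : q.Prime) (hpq : p ≠ q) :
    X ^ 2 ∣ cyclotomic (q * p) ℤ - (1 - X) := by
  have := Fact.mk hq
  have hqp : 1 < q * p := one_lt_mul_of_lt_of_le hq.one_lt hp.one_le
  have hq1 : (cyclotomic q ℤ).coeff 1 = 1 := by
    simp [cyclotomic_prime, coeff_X_pow, hq.one_lt]
  have hqp1 : (cyclotomic (q * p) ℤ).coeff 1 = -1 := by
    have h := congrArg (coeff · 1) (cyclotomic_expand_eq_cyclotomic_mul hp
      (mt (Nat.prime_dvd_prime_iff_eq hp hq).1 hpq) ℤ)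
    rw [coeff_expand hp.pos, if_neg (Nat.dvd_one.not.2 hp.one_lt.ne'), mul_coeff_one,
      cyclotomic_coeff_zero ℤ hqp, cyclotomic_coeff_zero ℤ hq.one_lt, hq1] at h
    linarith
  rw [X_pow_dvd_iff]
  intro d hd
  interval_cases d <;> simp [cyclotomic_coeff_zero ℤ hqp, hqp1, coeff_one]

theorem X_pow_succ_dvd_cyclotomic_sub (hp : p.Prime) (hq : q.Prime) (hpq : p ≠ q) (i : ℕ) :
    X ^ (p ^ i + 1) ∣ cyclotomic (q * p ^ (i + 1)) ℤ - (1 - X ^ p ^ i) := by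
  obtain ⟨g, hg⟩ := X_sq_dvd_cyclotomic_mul_sub hp hq hpq
  have hexp := congrArg (expand ℤ (p ^ i)) hg
  simp only [map_sub, map_one, map_mul, map_pow, expand_X,
    expand_prime_pow_cyclotomic ℤ hp (dvd_mul_left p q)] at hexp
  rw [show q * p ^ (i + 1) = q * p * p ^ i by ring, hexp, ← pow_mul]
  exact (pow_dvd_pow X (by have := Nat.one_le_pow i p hp.pos; omega)).mul_right _

theorem X_pow_succ_dvd_prod_cyclotomic_sub (hp : p.Prime) (hq : q.Prime) (hpq : p ≠ q)
    {J : Finset ℕ} {a : ℕ} (ha : a ∈ J) (hmin : ∀ i ∈ J, a ≤ i) :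
    X ^ (p ^ a + 1) ∣ ∏ i ∈ J, cyclotomic (q * p ^ (i + 1)) ℤ - (1 - X ^ p ^ a) := by
  refine dvd_prod_sub_of_dvd_sub ha (X_pow_succ_dvd_cyclotomic_sub hp hq hpq a) fun i hi => ?_
  have hai : a < i := (hmin i (mem_of_mem_erase hi)).lt_of_ne (ne_of_mem_erase hi).symm
  have hle : p ^ a + 1 ≤ p ^ i := Nat.pow_lt_pow_right hp.one_lt hai
  have h := X_pow_succ_dvd_cyclotomic_sub hp hq hpq i
  rw [show cyclotomic (q * p ^ (i + 1)) ℤ - 1 =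
    (cyclotomic (q * p ^ (i + 1)) ℤ - (1 - X ^ p ^ i)) - X ^ p ^ i by ring]
  exact dvd_sub ((pow_dvd_pow X (by omega)).trans h) (pow_dvd_pow X hle)

theorem exists_subset_eq_prod_cyclotomic_of_dvd {s : Finset ℕ} (hs : 0 ∉ s) {P : ℚ[X]}
    (hP : P.Monic) (h : P ∣ ∏ e ∈ s, cyclotomic e ℚ) : ∃ t ⊆ s, P = ∏ e ∈ t, cyclotomic e ℚ := by
  induction s using Finset.induction_on generalizing P with
  | empty => exact ⟨∅, subset_refl _, by simpa using hP.eq_one_of_isUnit (isUnit_of_dvd_one h)⟩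
  | @insert e s he ih =>
    rw [mem_insert, not_or] at hs
    rw [prod_insert he] at h
    by_cases hd : cyclotomic e ℚ ∣ P
    · obtain ⟨P', rfl⟩ := hd
      obtain ⟨t, hts, rfl⟩ := ih hs.2 ((cyclotomic.monic e ℚ).of_mul_monic_left hP)
        ((mul_dvd_mul_iff_left (cyclotomic_ne_zero e ℚ)).1 h)
      exact ⟨insert e t, insert_subset_insert e hts, (prod_insert fun het => he (hts het)).symm⟩
    · have hcop : IsCoprime (cyclotomic e ℚ) P :=
        (cyclotomic.irreducible_rat (Nat.pos_of_ne_zero (Ne.symm hs.1))).coprime_iff_not_dvd.2 hd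
      obtain ⟨t, hts, rfl⟩ := ih hs.2 hP (hcop.symm.dvd_of_dvd_mul_left h)
      exact ⟨t, hts.trans (subset_insert e s), rfl⟩

theorem exists_subset_divisors_eq_prod_cyclotomic {P : ℤ[X]} (hP : P.Monic) {d : ℕ}
    (hd : 0 < d) (h : P ∣ X ^ d - 1) : ∃ t ⊆ d.divisors, P = ∏ e ∈ t, cyclotomic e ℤ := by
  have hdvd : P.map (Int.castRingHom ℚ) ∣ ∏ e ∈ d.divisors, cyclotomic e ℚ := by
    rw [prod_cyclotomic_eq_X_pow_sub_one hd]
    simpa using Polynomial.map_dvd (Int.castRingHom ℚ) h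
  obtain ⟨t, hts, ht⟩ := exists_subset_eq_prod_cyclotomic_of_dvd (by simp) (hP.map _) hdvd
  refine ⟨t, hts, map_injective (Int.castRingHom ℚ) Int.cast_injective ?_⟩
  simp [ht, Polynomial.map_prod]

theorem not_isUnit_eval_one_cyclotomic_prime_pow (hp : p.Prime) (i : ℕ) :
    ¬IsUnit ((cyclotomic (p ^ i) ℤ).eval 1) := by
  have := Fact.mk hp
  cases i with
  | zero => simp
  | succ i =>
    rw [eval_one_cyclotomic_prime_pow, Int.isUnit_iff]
    have := hp.two_le
    omega

theorem eq_mul_pow_succ_of_dvd_of_isUnit (hp : p.Prime) (hq : q.Prime) {e n : ℕ}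
    (he : e ∣ p ^ n * q) (hunit : IsUnit ((cyclotomic e ℤ).eval 1)) :
    ∃ i < n, e = q * p ^ (i + 1) := by
  obtain ⟨y, z, hy, hz, rfl⟩ := Nat.dvd_mul.1 he
  obtain ⟨i, hi, rfl⟩ := (Nat.dvd_prime_pow hp).1 hy
  rcases (Nat.dvd_prime hq).1 hz with rfl | rfl
  · exact absurd (by simpa using hunit) (not_isUnit_eval_one_cyclotomic_prime_pow hp i)
  · cases i with
    | zero => exact absurd (by simpa using hunit) (not_isUnit_eval_one_cyclotomic_prime_pow hq 1)
    | succ i => exact ⟨i, hi, mul_comm _ _⟩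

end Polynomial

namespace NumericalSemigroup

variable (S : NumericalSemigroup)

noncomputable def hilbertCoeff (m : ℕ) : ℤ := if m ∈ S.carrier then 1 else 0

def toAddSubmonoid : AddSubmonoid ℕ where
  carrier := S.carrier
  zero_mem' := S.zero_mem
  add_mem' := fun ha hb => S.add_mem ha hb

theorem eval_one_P : S.P.eval 1 = 1 := by
  simp [P]

theorem coeff_P_mul_geom_sum (c m : ℕ) :
    (S.P * ∑ i ∈ range c, X ^ i).coeff m =
      S.hilbertCoeff m - if c ≤ m then S.hilbertCoeff (m - c) else 0 := by
  have h : S.P * ∑ i ∈ range c, X ^ i =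
      ∑ i ∈ range c, X ^ i + (X ^ c - 1) * ∑ s ∈ S.finite_compl.toFinset, X ^ s := by
    rw [P]
    linear_combination (∑ s ∈ S.finite_compl.toFinset, (X : ℤ[X]) ^ s) * geom_sum_mul (X : ℤ[X]) c
  rw [h]
  simp only [coeff_add, sub_mul, one_mul, coeff_sub, coeff_X_pow_mul', finsetSum_coeff,
    coeff_X_pow, sum_ite_eq, mem_range, Set.Finite.mem_toFinset, Set.mem_compl_iff, hilbertCoeff]
  split_ifs <;> omega

theorem coeff_P (m : ℕ) :
    S.P.coeff m = S.hilbertCoeff m - if 1 ≤ m then S.hilbertCoeff (m - 1) else 0 := by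
  simpa using S.coeff_P_mul_geom_sum 1 m

theorem exists_conductor :
    ∃ c, (∀ m, c ≤ m → m ∈ S.carrier) ∧ ∀ m, m + 1 = c → m ∉ S.carrier := by
  have h : ∃ c, ∀ m, c ≤ m → m ∈ S.carrier := by
    obtain ⟨b, hb⟩ := S.finite_compl.bddAbove
    exact ⟨b + 1, fun m hm => by_contra fun h => by have := hb h; omega⟩
  refine ⟨Nat.find h, Nat.find_spec h, fun m hm hmS => Nat.find_min h (by omega : m < _) ?_⟩
  intro k hk
  rcases hk.eq_or_lt with rfl | hlt
  · exact hmS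
  · exact Nat.find_spec h k (by omega)

theorem P_monic_s12 : S.P.Monic := by
  obtain ⟨c, hc, hc'⟩ := S.exists_conductor
  refine monic_of_natDegree_le_of_coeff_eq_one c
    (natDegree_le_iff_coeff_eq_zero.2 fun m hm => ?_) ?_
  · simp [coeff_P, hilbertCoeff, hc m hm.le, hc (m - 1) (by omega), show 1 ≤ m by omega]
  · cases c with
    | zero => simp [coeff_P, hilbertCoeff, S.zero_mem]
    | succ c => simp [coeff_P, hilbertCoeff, hc _ le_rfl, hc' c rfl]

theorem P_mul_geom_sum_ne {c M : ℕ} (hcM : c < M) {E B : ℤ[X]}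
    (hE0 : E.coeff 0 = 1) (hEc : E.coeff c = 0) (hEM : E.coeff M = 0)
    (hB : X ^ (M + 1) ∣ B - (1 - X ^ M)) : S.P * ∑ i ∈ range c, X ^ i ≠ E * B := by
  intro h
  obtain ⟨D, hD⟩ := hB
  have hcoeff : ∀ m ≤ M, S.hilbertCoeff m - (if c ≤ m then S.hilbertCoeff (m - c) else 0) =
      E.coeff m - if M ≤ m then E.coeff (m - M) else 0 := by
    intro m hm
    rw [← coeff_P_mul_geom_sum, h, show E * B = E - E * X ^ M + X ^ (M + 1) * (E * D) by
      linear_combination E * hD, coeff_add, coeff_sub, coeff_mul_X_pow', coeff_X_pow_mul',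
      if_neg (show ¬M + 1 ≤ m by omega), add_zero]
  have hc' := hcoeff c hcM.le
  have hM := hcoeff M le_rfl
  simp only [le_refl, if_true, Nat.sub_self, if_neg (not_le.2 hcM), hcM.le, hEc, hEM, hE0]
    at hc' hM
  have hsum := S.add_mem (a := M - c) (b := c)
  rw [Nat.sub_add_cancel hcM.le] at hsum
  simp only [hilbertCoeff, S.zero_mem] at hc' hM
  split_ifs at hc' hM <;> simp_all

theorem carrier_subset_closure {a q : ℕ} (hq : 0 < q)
    (h : ∀ m ∈ S.carrier, a ∣ m ∨ q ≤ m ∧ m - q ∈ S.carrier) :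
    S.carrier ⊆ AddSubmonoid.closure {a, q} := by
  intro m hm
  induction m using Nat.strong_induction_on with
  | _ m ih =>
    rcases h m hm with ⟨k, rfl⟩ | ⟨hqm, hmq⟩
    · simpa [mul_comm a] using nsmul_mem (AddSubmonoid.subset_closure
        (by simp : a ∈ ({a, q} : Set ℕ))) k
    · rw [← Nat.sub_add_cancel hqm]
      exact AddSubmonoid.add_mem _ (ih _ (by omega) hmq) (AddSubmonoid.subset_closure (by simp))

theorem carrier_eq_closure_of_P_mul_geom_sum {a q : ℕ} (hcop : a.Coprime q) (hq : 1 < q)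
    (h : S.P * ∑ i ∈ range q, X ^ i = expand ℤ a (∑ i ∈ range q, X ^ i)) :
    S.carrier = AddSubmonoid.closure {a, q} := by
  have ha : 0 < a := Nat.pos_of_ne_zero fun ha => by simp [ha] at hcop; omega
  have hrel : ∀ m, S.hilbertCoeff m - (if q ≤ m then S.hilbertCoeff (m - q) else 0) =
      if a ∣ m ∧ m / a < q then 1 else 0 := by
    intro m
    rw [← coeff_P_mul_geom_sum, h, coeff_expand ha]
    simp [finsetSum_coeff, coeff_X_pow, ite_and]
  have hqS : q ∈ S.carrier := by
    have hnq : ¬(a ∣ q ∧ q / a < q) := fun ⟨hd, hlt⟩ => by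
      simp [hcop.eq_one_of_dvd hd] at hlt
    have := hrel q
    simp only [le_refl, if_true, Nat.sub_self, if_neg hnq, hilbertCoeff, S.zero_mem] at this
    split_ifs at this with hqS
    exacts [hqS, by omega]
  have haS : a ∈ S.carrier := by
    have hself : a ∣ a ∧ a / a < q := ⟨dvd_rfl, by rwa [Nat.div_self ha]⟩
    have := hrel a
    rw [if_pos hself] at this
    simp only [hilbertCoeff] at this
    split_ifs at this <;> first | assumption | omega
  refine subset_antisymm (S.carrier_subset_closure (by omega) fun m hm => ?_) ?_
  · by_cases hdvd : a ∣ m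
    · exact Or.inl hdvd
    have := hrel m
    simp only [hilbertCoeff, hm, if_true, hdvd, false_and, if_false] at this
    split_ifs at this with hqm hmq
    exacts [Or.inr ⟨hqm, hmq⟩, by omega, by omega]
  · exact AddSubmonoid.closure_le (S := S.toAddSubmonoid).2 (by
      simp [Set.insert_subset_iff, toAddSubmonoid, haS, hqS])

variable {p q : ℕ}

theorem exists_P_eq_prod_cyclotomic (hp : p.Prime) (hq : q.Prime) {n : ℕ}
    (hdvd : S.P ∣ X ^ (p ^ n * q) - 1) :
    ∃ I ⊆ range n, S.P = ∏ i ∈ I, cyclotomic (q * p ^ (i + 1)) ℤ := by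
  obtain ⟨t, hts, hPt⟩ :=
    exists_subset_divisors_eq_prod_cyclotomic S.P_monic_s12 (by positivity [hp.pos, hq.pos]) hdvd
  have heval : ∏ e ∈ t, (cyclotomic e ℤ).eval 1 = 1 := by
    rw [← eval_prod, ← hPt, S.eval_one_P]
  have hform : ∀ e ∈ t, ∃ i < n, e = q * p ^ (i + 1) := fun e he =>
    eq_mul_pow_succ_of_dvd_of_isUnit hp hq (Nat.dvd_of_mem_divisors (hts he))
      (isUnit_of_dvd_one ((dvd_prod_of_mem _ he).trans heval.dvd))
  have hinj : Function.Injective fun i => q * p ^ (i + 1) := fun i j hij =>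
    Nat.add_right_cancel (Nat.pow_right_injective hp.two_le
      (Nat.eq_of_mul_eq_mul_left hq.pos hij))
  have ht : t = ((range n).filter fun i => q * p ^ (i + 1) ∈ t).image fun i => q * p ^ (i + 1) := by
    ext e
    simp only [mem_image, mem_filter, mem_range]
    constructor
    · intro he
      obtain ⟨i, hi, rfl⟩ := hform e he
      exact ⟨i, ⟨hi, he⟩, rfl⟩
    · rintro ⟨i, ⟨-, hi⟩, rfl⟩
      exact hi
  refine ⟨_, filter_subset (fun i => q * p ^ (i + 1) ∈ t) _, ?_⟩
  rw [hPt]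
  nth_rw 1 [ht]
  exact prod_image fun i _ j _ hij => hinj hij

theorem range_subset_of_P_eq_prod_cyclotomic (hp : p.Prime) (hq : q.Prime) (hpq : p ≠ q)
    {I : Finset ℕ} (hP : S.P = ∏ i ∈ I, cyclotomic (q * p ^ (i + 1)) ℤ) {k : ℕ} (hk : k ∈ I) :
    range k ⊆ I := by
  by_contra hsub
  have hne : (range k \ I).Nonempty := sdiff_nonempty.2 hsub
  set j := (range k \ I).min' hne
  obtain ⟨hjk, hjI⟩ : j ∈ range k ∧ j ∉ I := mem_sdiff.1 (min'_mem _ hne)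
  have hbelow : ∀ i < j, i ∈ I := fun i hij => by_contra fun hiI =>
    (min'_le _ i (mem_sdiff.2 ⟨mem_range.2 (hij.trans (mem_range.1 hjk)), hiI⟩)).not_gt hij
  set J := I.filter (j < ·)
  have hkJ : k ∈ J := mem_filter.2 ⟨hk, mem_range.1 hjk⟩
  set a := J.min' ⟨k, hkJ⟩
  have haJ : a ∈ J := min'_mem _ _
  have hja : j < a := (mem_filter.1 haJ).2
  have hsplit : S.P = (∏ i ∈ range j, cyclotomic (q * p ^ (i + 1)) ℤ) *
      ∏ i ∈ J, cyclotomic (q * p ^ (i + 1)) ℤ := by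
    rw [hP, ← prod_filter_mul_prod_filter_not I (· < j)]
    congr 2
    · ext i
      simp only [mem_filter, mem_range]
      exact ⟨fun h => h.2, fun h => ⟨hbelow i h, h⟩⟩
    · ext i
      simp only [J, mem_filter, not_lt]
      exact and_congr_right fun hi =>
        ⟨fun hji => hji.lt_of_ne fun h => hjI (by rwa [h]), le_of_lt⟩
  have hndvd : ∀ i, ¬q ∣ p ^ i := fun i h =>
    hpq ((Nat.prime_dvd_prime_iff_eq hq hp).1 (hq.dvd_of_dvd_pow h)).symm
  refine S.P_mul_geom_sum_ne (Nat.pow_lt_pow_right hp.one_lt hja)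
    (E := expand ℤ q (∑ i ∈ range (p ^ j), X ^ i)) ?_ ?_ ?_
    (X_pow_succ_dvd_prod_cyclotomic_sub hp hq hpq haJ fun i hi => min'_le _ i hi) ?_
  · rw [coeff_expand hq.pos, if_pos (dvd_zero q)]
    simp [finsetSum_coeff, coeff_X_pow, hp.pos]
  · rw [coeff_expand hq.pos, if_neg (hndvd j)]
  · rw [coeff_expand hq.pos, if_neg (hndvd a)]
  · rw [hsplit, mul_right_comm, mul_geom_sum_eq_expand hq.pos
      (prod_cyclotomic_mul_X_pow_sub_one_mul ℤ hp hq hpq j)]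

end NumericalSemigroup

open NumericalSemigroup in
theorem depth_pnq_height_one_general (p q : ℕ) (hp : p.Prime) (hq : q.Prime) (hpq : p ≠ q)
    (n : ℕ) (T : NumericalSemigroup)
    (hdh : HasDepthHeight T (p ^ n * q) 1) :
    T.carrier = ↑(AddSubmonoid.closure ({p ^ n, q} : Set ℕ)) := by
  obtain ⟨hdvd, hP_nonunit, hmin⟩ := hdh
  simp only [pow_one] at hdvd hmin
  obtain ⟨I, hIn, hPI⟩ := T.exists_P_eq_prod_cyclotomic hp hq hdvd
  have hI : I.Nonempty := nonempty_iff_ne_empty.2 fun h => hP_nonunit 1 one_pos (by simp [hPI, h])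
  set k := I.max' hI
  have hIk : I = range (k + 1) := by
    refine subset_antisymm (fun i hi => mem_range_succ_iff.2 (le_max' I i hi)) ?_
    rw [range_add_one, insert_subset_iff]
    exact ⟨max'_mem I hI, T.range_subset_of_P_eq_prod_cyclotomic hp hq hpq hPI (max'_mem I hI)⟩
  have hkn : k + 1 = n := by
    have hle : k + 1 ≤ n := mem_range.1 (hIn (max'_mem I hI))
    by_contra hne
    refine hmin (p ^ (k + 1) * q) (mul_dvd_mul_right (pow_dvd_pow p hle) q)
      (Nat.mul_lt_mul_of_pos_right (Nat.pow_lt_pow_right hp.one_lt (by omega)) hq.pos) ?_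
    rw [hPI, hIk]
    exact Dvd.intro _ (prod_cyclotomic_mul_eq_X_pow_sub_one ℤ hp hq hpq (k + 1))
  have := Fact.mk hq
  refine T.carrier_eq_closure_of_P_mul_geom_sum
    (Nat.Coprime.pow_left n ((Nat.coprime_primes hp hq).2 hpq)) hq.one_lt ?_
  rw [← cyclotomic_prime ℤ q, hPI, hIk, hkn]
  exact prod_cyclotomic_mul_cyclotomic_eq_expand ℤ hp
    (mt (Nat.prime_dvd_prime_iff_eq hp hq).1 hpq) n

open NumericalSemigroup in
/-- If `p ≠ q` are primes, `n ≥ 1`, and `T` is a cyclotomic numerical semigroup of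
depth `p^n·q` and height `1`, then `T = ⟨p^n, q⟩`. -/
theorem depth_pnq_height_one (p q : ℕ) (hp : p.Prime) (hq : q.Prime) (hpq : p ≠ q)
    (n : ℕ) (hn : 0 < n) (T : NumericalSemigroup)
    (hcyc : T.IsCyclotomicNS) (hdh : HasDepthHeight T (p ^ n * q) 1) :
    T.carrier = ↑(AddSubmonoid.closure ({p ^ n, q} : Set ℕ)) :=
  depth_pnq_height_one_general p q hp hq hpq n T hdh
end
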